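/- Define polynomials P_n(x) by P_0(x) = P_1(x) = 1 and P_{n+1}(x) = P_n(x) - x P_{n-1}(x) for n ≥ 1, and define a_n(x) by a_0(x) = a_1(x) = 1, a_n(x) = a_{n-1}(x) - x a_{n-2}(x) for odd n ≥ 3, and a_n(x) = (1+x) a_{n-1}(x) - x a_{n-2}(x) for even n ≥ 2. Then for all n ≥ 0, a_n(x) * (1+x)^{n - ⌊n/2⌋} equals the polynomial obtained from (1+x)^n * P_n(x/(1+x)); equivalently, as rational functions, a_n(x) = (1+x)^{⌊n/2⌋} P_n(x/(1+x)). -/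

import Mathlib

open Polynomial

/-- The polynomials `a_n(x)`: `a₀ = a₁ = 1`, and for `n ≥ 2`,
`a_n = a_{n-1} - x a_{n-2}` if `n` is odd, `a_n = (1+x) a_{n-1} - x a_{n-2}` if `n` is even. -/
noncomputable def aPoly : ℕ → Polynomial ℚ
  | 0 => 1
  | 1 => 1
  | (n + 2) =>
    if (n + 2) % 2 = 1 then aPoly (n + 1) - Polynomial.X * aPoly n
    else (1 + Polynomial.X) * aPoly (n + 1) - Polynomial.X * aPoly n

/-- The polynomials `P_n(x)`: `P₀ = P₁ = 1` and `P_{n+1} = P_n - x P_{n-1}`. -/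
noncomputable def PPoly : ℕ → Polynomial ℚ
  | 0 => 1
  | 1 => 1
  | (n + 2) => PPoly (n + 1) - Polynomial.X * PPoly n

/-! Put `u = 1 + x` and `y = x / (1 + x)`, so that `x = u * y` and `u = 1 + u * y`. Only this
relation is needed, in any commutative `ℚ`-algebra: the factor `1 + x` of the even-index recursion
of `a` becomes `u`, so `a_n(u y)` and `u ^ ⌊n/2⌋ * P_n(y)` satisfy the same recursion, a
factor `u` being gained exactly at each even index. -/

lemma aPoly_two_mul_add_two (m : ℕ) :
    aPoly (2 * m + 2) = (1 + X) * aPoly (2 * m + 1) - X * aPoly (2 * m) := by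
  rw [aPoly, if_neg (by omega)]

lemma aPoly_two_mul_add_three (m : ℕ) :
    aPoly (2 * m + 3) = aPoly (2 * m + 2) - X * aPoly (2 * m + 1) := by
  rw [aPoly, if_pos (by omega)]

lemma PPoly_add_two (n : ℕ) : PPoly (n + 2) = PPoly (n + 1) - X * PPoly n := rfl

section Substitution

variable {A : Type*} [CommRing A] [Algebra ℚ A] {u y : A}

lemma aeval_aPoly_two_mul_and_two_mul_add_one (hu : 1 + u * y = u) (m : ℕ) :
    aeval (u * y) (aPoly (2 * m)) = u ^ m * aeval y (PPoly (2 * m)) ∧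
      aeval (u * y) (aPoly (2 * m + 1)) = u ^ m * aeval y (PPoly (2 * m + 1)) := by
  induction m with
  | zero => simp [aPoly, PPoly]
  | succ m ih =>
    obtain ⟨h_even, h_odd⟩ := ih
    have h_even' :
        aeval (u * y) (aPoly (2 * m + 2)) = u ^ (m + 1) * aeval y (PPoly (2 * m + 2)) := by
      rw [aPoly_two_mul_add_two, PPoly_add_two]
      simp only [map_sub, map_mul, map_add, map_one, aeval_X, h_even, h_odd, hu]
      ring
    refine ⟨h_even', ?_⟩
    rw [show 2 * (m + 1) + 1 = 2 * m + 3 by ring, aPoly_two_mul_add_three, PPoly_add_two]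
    simp only [map_sub, map_mul, aeval_X, h_even', h_odd]
    ring

lemma aeval_mul_aPoly_eq_pow_mul_aeval_PPoly (hu : 1 + u * y = u) (n : ℕ) :
    aeval (u * y) (aPoly n) = u ^ (n / 2) * aeval y (PPoly n) := by
  obtain ⟨m, rfl | rfl⟩ := Nat.even_or_odd' n
  · rw [Nat.mul_div_cancel_left m two_pos]
    exact (aeval_aPoly_two_mul_and_two_mul_add_one hu m).1
  · rw [show (2 * m + 1) / 2 = m by omega]
    exact (aeval_aPoly_two_mul_and_two_mul_add_one hu m).2

end Substitution

lemma RatFunc.one_add_X_ne_zero : (1 + RatFunc.X : RatFunc ℚ) ≠ 0 := by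
  rw [← RatFunc.algebraMap_X, ← map_one (algebraMap ℚ[X] (RatFunc ℚ)), ← map_add,
    Ne, FaithfulSMul.algebraMap_eq_zero_iff]
  intro h
  simpa using congrArg (Polynomial.eval 0) h

/-- As rational functions, `a_n(x) = (1+x)^{⌊n/2⌋} P_n(x/(1+x))`. -/
theorem aPoly_eq_PPoly_substitution (n : ℕ) :
    Polynomial.aeval (RatFunc.X : RatFunc ℚ) (aPoly n) =
      (1 + RatFunc.X) ^ (n / 2) *
        Polynomial.aeval ((RatFunc.X : RatFunc ℚ) / (1 + RatFunc.X)) (PPoly n) := by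
  have hX : (1 + RatFunc.X) * (RatFunc.X / (1 + RatFunc.X)) = (RatFunc.X : RatFunc ℚ) :=
    mul_div_cancel₀ _ RatFunc.one_add_X_ne_zero
  rw [← aeval_mul_aPoly_eq_pow_mul_aeval_PPoly (by rw [hX]), hX]
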